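/- Let K ≥ 2, N ≥ 1, x : {1,…,N} → {1,…,K}, and θ ∈ Δ. Let μ denote the (K−1)-dimensional Hausdorff measure on the affine hyperplane {z ∈ ℝ^K : Σ_ℓ z_ℓ = 1}, and μ^{⊗N} the corresponding product measure on Δ^N. Then μ^{⊗N}({u ∈ Δ^N : θ ∈ F(u)}) = (Π_{k=1}^K θ_k^{N_k}) · μ(Δ)^N, where N_k = |{n : x_n = k}|. Equivalently, under the uniform probability measure on Δ^N, the probability that θ ∈ F(u) equals the multinomial likelihood Π_k θ_k^{N_k}. -/

import Mathlib

open MeasureTheory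

noncomputable section

/-- The probability simplex inside `EuclideanSpace ℝ (Fin K)`. -/
def esimplex (K : ℕ) : Set (EuclideanSpace ℝ (Fin K)) :=
  {z | (∀ i, 0 ≤ z i) ∧ ∑ i, z i = 1}

/-- The `ℓ`-th vertex of the probability simplex (standard basis vector). -/
def evtx (K : ℕ) (ℓ : Fin K) : EuclideanSpace ℝ (Fin K) :=
  (EuclideanSpace.equiv (Fin K) ℝ).symm (fun i => if i = ℓ then 1 else 0)

/-- The subsimplex `Δ_k(θ)`: convex hull of `{θ} ∪ {V_ℓ : ℓ ≠ k}`. -/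
def esubsimplex (K : ℕ) (k : Fin K) (θ : EuclideanSpace ℝ (Fin K)) :
    Set (EuclideanSpace ℝ (Fin K)) :=
  convexHull ℝ (insert θ {z | ∃ ℓ : Fin K, ℓ ≠ k ∧ z = evtx K ℓ})

/-!
The linear map `T = id + e_kᵀ ⊗ (θ - V_k)` fixes `V_ℓ` for `ℓ ≠ k` and sends `V_k` to `θ`, so
`Δ_k(θ) = T(Δ)`. Since `Σ θ_ℓ = 1`, `T` preserves the hyperplane `H` of zero-sum vectors and
induces the identity on the quotient by `H`; hence `det (T|_H) = det T = θ_k`. As `Δ` lies in a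
translate of `H`, where `μ` is a Haar measure, `μ(Δ_k(θ)) = θ_k μ(Δ)`. Finally `{u | θ ∈ F(u)}` is
the box `∏_n Δ_{x_n}(θ)`.
-/

open Module Set

theorem LinearMap.det_id_add_smulRight {R M : Type*} [CommRing R] [AddCommGroup M] [Module R M]
    [Module.Free R M] [Module.Finite R M] (f : M →ₗ[R] R) (v : M) :
    (LinearMap.id + f.smulRight v).det = 1 + f v := by
  let b := Module.Free.chooseBasis R M
  have hM : LinearMap.toMatrix b b (LinearMap.id + f.smulRight v) =
      1 + Matrix.replicateCol Unit (b.repr v) * Matrix.replicateRow Unit (fun i => f (b i)) := by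
    ext i j
    rw [← Matrix.vecMulVec_eq Unit]
    simp [LinearMap.toMatrix_apply, Matrix.one_apply, Finsupp.single_apply, eq_comm,
      Matrix.vecMulVec_apply, mul_comm]
  rw [← LinearMap.det_toMatrix b, hM, Matrix.det_one_add_replicateCol_mul_replicateRow]
  congr 1
  conv_rhs => rw [← b.sum_repr v]
  simp only [dotProduct, map_sum, map_smul, smul_eq_mul, mul_comm]

section AffineSubspace

variable {E : Type*} [NormedAddCommGroup E] [NormedSpace ℝ E] (H : Submodule ℝ E)

lemma isometry_add_submoduleVal (p : E) : Isometry fun h : H => p + h :=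
  (isometry_add_left p).comp isometry_subtype_coe

variable [MeasurableSpace E] [BorelSpace E]

theorem hausdorffMeasure_eq_preimage_of_sub_mem {d : ℝ} (hd : 0 ≤ d) (p : E) {s : Set E}
    (hs : ∀ z ∈ s, z - p ∈ H) :
    μH[d] s = μH[d] ((fun h : H => p + h) ⁻¹' s) := by
  rw [← (isometry_add_submoduleVal H p).hausdorffMeasure_image (Or.inl hd),
    image_preimage_eq_of_subset]
  intro z hz
  exact ⟨⟨z - p, hs z hz⟩, add_sub_cancel p z⟩

variable [FiniteDimensional ℝ H]

theorem hausdorffMeasure_lt_top_of_sub_mem (p : E) {s : Set E} (hs : ∀ z ∈ s, z - p ∈ H)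
    (hc : IsCompact s) : μH[finrank ℝ H] s < ⊤ := by
  rw [hausdorffMeasure_eq_preimage_of_sub_mem H (Nat.cast_nonneg _) p hs]
  exact ((isometry_add_submoduleVal H p).isClosedEmbedding.isCompact_preimage hc).measure_lt_top

theorem hausdorffMeasure_image_linearMap_of_sub_mem (T : E →ₗ[ℝ] E) (hT : H ≤ H.comap T)
    (p : E) {s : Set E} (hs : ∀ z ∈ s, z - p ∈ H) :
    μH[finrank ℝ H] (T '' s) = ENNReal.ofReal |(T.restrict hT).det| * μH[finrank ℝ H] s := by
  have hTs : ∀ z ∈ T '' s, z - T p ∈ H := by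
    rintro _ ⟨z, hz, rfl⟩
    rw [← map_sub]
    exact hT (hs z hz)
  have hpreimage : (fun h : H => T p + h) ⁻¹' (T '' s) =
      T.restrict hT '' ((fun h : H => p + h) ⁻¹' s) := by
    ext h
    constructor
    · rintro ⟨z, hz, hzh⟩
      refine ⟨⟨z - p, hs z hz⟩, by simpa using hz, Subtype.ext ?_⟩
      simp [hzh, map_sub]
    · rintro ⟨h', hh', rfl⟩
      exact ⟨_, hh', by simp [map_add]⟩
  rw [hausdorffMeasure_eq_preimage_of_sub_mem H (Nat.cast_nonneg _) p hs,
    hausdorffMeasure_eq_preimage_of_sub_mem H (Nat.cast_nonneg _) _ hTs, hpreimage,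
    Measure.addHaar_image_linearMap]

end AffineSubspace
lemma evtx_apply (K : ℕ) (ℓ i : Fin K) : evtx K ℓ i = if i = ℓ then 1 else 0 := rfl

lemma sum_evtx (K : ℕ) (ℓ : Fin K) : ∑ i, evtx K ℓ i = 1 := by
  simp [evtx_apply]

lemma esimplex_eq_convexHull (K : ℕ) : esimplex K = convexHull ℝ (range (evtx K)) := by
  have h : esimplex K =
      (EuclideanSpace.equiv (Fin K) ℝ).symm.toLinearMap '' stdSimplex ℝ (Fin K) := by
    ext z
    exact ⟨fun hz => ⟨z.ofLp, hz, rfl⟩, by rintro ⟨y, hy, rfl⟩; exact hy⟩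
  rw [h, ← convexHull_basis_eq_stdSimplex, LinearMap.image_convexHull, ← range_comp]
  congr 2
  funext ℓ
  ext i
  simp [evtx_apply, eq_comm]

lemma isCompact_esimplex (K : ℕ) : IsCompact (esimplex K) := by
  rw [esimplex_eq_convexHull]
  exact (finite_range _).isCompact_convexHull (𝕜 := ℝ)

lemma esubsimplex_subset_esimplex (K : ℕ) (k : Fin K) {θ : EuclideanSpace ℝ (Fin K)}
    (hθ : θ ∈ esimplex K) : esubsimplex K k θ ⊆ esimplex K := by
  rw [esimplex_eq_convexHull] at hθ ⊢
  refine convexHull_min ?_ (convex_convexHull ℝ _)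
  rintro z (rfl | ⟨ℓ, -, rfl⟩)
  · exact hθ
  · exact subset_convexHull ℝ _ (mem_range_self ℓ)

def coordSum (K : ℕ) : EuclideanSpace ℝ (Fin K) →ₗ[ℝ] ℝ :=
  ∑ i, (EuclideanSpace.proj i : EuclideanSpace ℝ (Fin K) →L[ℝ] ℝ).toLinearMap

lemma coordSum_apply (K : ℕ) (z : EuclideanSpace ℝ (Fin K)) : coordSum K z = ∑ i, z i := by
  simp [coordSum]

lemma finrank_ker_coordSum {K : ℕ} (hK : 1 ≤ K) :
    (finrank ℝ (LinearMap.ker (coordSum K)) : ℝ) = K - 1 := by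
  have hne : coordSum K ≠ 0 := fun h => by
    simpa [coordSum_apply, sum_evtx] using LinearMap.congr_fun h (evtx K ⟨0, hK⟩)
  have := Module.Dual.finrank_ker_add_one_of_ne_zero hne
  rw [finrank_euclideanSpace_fin] at this
  rw [eq_sub_iff_add_eq]
  exact_mod_cast this

lemma sub_mem_ker_coordSum {K : ℕ} {z w : EuclideanSpace ℝ (Fin K)} (hz : ∑ i, z i = 1)
    (hw : ∑ i, w i = 1) : z - w ∈ LinearMap.ker (coordSum K) := by
  simp [coordSum_apply, Finset.sum_sub_distrib, hz, hw]

def replaceVertex (K : ℕ) (k : Fin K) (θ : EuclideanSpace ℝ (Fin K)) :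
    EuclideanSpace ℝ (Fin K) →ₗ[ℝ] EuclideanSpace ℝ (Fin K) :=
  LinearMap.id + (EuclideanSpace.proj k : EuclideanSpace ℝ (Fin K) →L[ℝ] ℝ).toLinearMap.smulRight
    (θ - evtx K k)

section replaceVertex

variable {K : ℕ} (k : Fin K) (θ : EuclideanSpace ℝ (Fin K))

lemma replaceVertex_apply (z : EuclideanSpace ℝ (Fin K)) :
    replaceVertex K k θ z = z + z k • (θ - evtx K k) := rfl

lemma replaceVertex_evtx (ℓ : Fin K) :
    replaceVertex K k θ (evtx K ℓ) = if ℓ = k then θ else evtx K ℓ := by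
  rw [replaceVertex_apply, evtx_apply]
  split_ifs with h₁ h₂ h₂
  · subst h₁; simp
  · exact absurd h₁.symm h₂
  · exact absurd h₂.symm h₁
  · simp

lemma image_replaceVertex_esimplex :
    replaceVertex K k θ '' esimplex K = esubsimplex K k θ := by
  rw [esimplex_eq_convexHull, LinearMap.image_convexHull, esubsimplex, ← range_comp]
  congr 1
  ext z
  simp only [mem_range, Function.comp_apply, replaceVertex_evtx, mem_insert_iff]
  constructor
  · rintro ⟨ℓ, rfl⟩
    by_cases h : ℓ = k
    · exact Or.inl (if_pos h)
    · exact Or.inr ⟨ℓ, h, if_neg h⟩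
  · rintro (rfl | ⟨ℓ, h, rfl⟩)
    · exact ⟨k, if_pos rfl⟩
    · exact ⟨ℓ, if_neg h⟩

lemma det_replaceVertex : (replaceVertex K k θ).det = θ k := by
  refine (LinearMap.det_id_add_smulRight _ _).trans ?_
  simp [evtx_apply]

variable {θ} (hθ : ∑ i, θ i = 1)
include hθ

lemma ker_coordSum_le_comap_replaceVertex :
    LinearMap.ker (coordSum K) ≤ (LinearMap.ker (coordSum K)).comap (replaceVertex K k θ) := by
  intro z hz
  have hz' : coordSum K (θ - evtx K k) = 0 := sub_mem_ker_coordSum hθ (sum_evtx K k)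
  simp_all [replaceVertex_apply]

lemma det_restrict_replaceVertex :
    ((replaceVertex K k θ).restrict (ker_coordSum_le_comap_replaceVertex k hθ)).det = θ k := by
  have hQ : (LinearMap.ker (coordSum K)).mapQ _ (replaceVertex K k θ)
      (ker_coordSum_le_comap_replaceVertex k hθ) = LinearMap.id := by
    refine Submodule.linearMap_qext _ (LinearMap.ext fun z => ?_)
    simp only [LinearMap.comp_apply, Submodule.mkQ_apply, Submodule.mapQ_apply,
      LinearMap.id_apply, Submodule.Quotient.eq, replaceVertex_apply, add_sub_cancel_left]
    exact Submodule.smul_mem _ _ (sub_mem_ker_coordSum hθ (sum_evtx K k))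
  have hdet := LinearMap.det_eq_det_mul_det _ (replaceVertex K k θ)
    (ker_coordSum_le_comap_replaceVertex k hθ)
  rw [hQ, LinearMap.det_id, mul_one, det_replaceVertex] at hdet
  exact hdet.symm

end replaceVertex

lemma measure_esubsimplex {K : ℕ} (hK : 1 ≤ K) (k : Fin K) {θ : EuclideanSpace ℝ (Fin K)}
    (hθ : θ ∈ esimplex K) :
    μH[(K : ℝ) - 1] (esubsimplex K k θ) = ENNReal.ofReal (θ k) * μH[(K : ℝ) - 1] (esimplex K) := by
  rw [← finrank_ker_coordSum hK, ← image_replaceVertex_esimplex,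
    hausdorffMeasure_image_linearMap_of_sub_mem _ _ (ker_coordSum_le_comap_replaceVertex k hθ.2)
      (evtx K k) (fun z hz => sub_mem_ker_coordSum hz.2 (sum_evtx K k)),
    det_restrict_replaceVertex k hθ.2, abs_of_nonneg (hθ.1 k)]

lemma measure_esimplex_lt_top {K : ℕ} (hK : 1 ≤ K) : μH[(K : ℝ) - 1] (esimplex K) < ⊤ := by
  rw [← finrank_ker_coordSum hK]
  exact hausdorffMeasure_lt_top_of_sub_mem _ (evtx K ⟨0, hK⟩)
    (fun z hz => sub_mem_ker_coordSum hz.2 (sum_evtx K _)) (isCompact_esimplex K)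

theorem stmt17 (K N : ℕ) (hK : 2 ≤ K)
    (x : Fin N → Fin K)
    (θ : EuclideanSpace ℝ (Fin K)) (hθ : θ ∈ esimplex K) :
    Measure.pi (fun _ : Fin N => μH[(K : ℝ) - 1].restrict (esimplex K))
        {u : Fin N → EuclideanSpace ℝ (Fin K) | ∀ n, u n ∈ esubsimplex K (x n) θ} =
      (∏ k : Fin K,
          ENNReal.ofReal (θ k) ^ (Finset.univ.filter fun n => x n = k).card) *
        μH[(K : ℝ) - 1] (esimplex K) ^ N := by
  have hK₁ : 1 ≤ K := by omega
  have : IsFiniteMeasure (μH[(K : ℝ) - 1].restrict (esimplex K)) :=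
    ⟨by simpa using measure_esimplex_lt_top hK₁⟩
  have hfactor (n : Fin N) : μH[(K : ℝ) - 1].restrict (esimplex K) (esubsimplex K (x n) θ) =
      ENNReal.ofReal (θ (x n)) * μH[(K : ℝ) - 1] (esimplex K) := by
    rw [Measure.restrict_eq_self _ (esubsimplex_subset_esimplex K (x n) hθ),
      measure_esubsimplex hK₁ (x n) hθ]
  have hbox : {u : Fin N → EuclideanSpace ℝ (Fin K) | ∀ n, u n ∈ esubsimplex K (x n) θ} =
      Set.univ.pi fun n => esubsimplex K (x n) θ := by
    ext; simp
  rw [hbox, Measure.pi_pi]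
  simp only [hfactor, Finset.prod_mul_distrib, Finset.prod_const, Finset.card_univ,
    Fintype.card_fin]
  rw [← Finset.prod_fiberwise' Finset.univ x fun k => ENNReal.ofReal (θ k)]
  simp only [Finset.prod_const]
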